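/- Let I₀, I₁, J be ideals on an infinite set X such that I₀ and I₁ are not orthogonal, I₀∩I₁ ⊆ J, and the family I₀∨I₁ = {A∪B : A ∈ I₀, B ∈ I₁} is an ideal. Then cof_J(I₀∨I₁) = max{cof_J(I₀), cof_J(I₁)}. -/

import Mathlib

open Cardinal Set

def IsIdealOn {X : Type*} (I : Set (Set X)) : Prop :=
  (∀ A ∈ I, ∀ B, B ⊆ A → B ∈ I) ∧
  (∀ A ∈ I, ∀ B ∈ I, A ∪ B ∈ I) ∧
  (Set.univ : Set X) ∉ I ∧
  (∀ A : Set X, A.Finite → A ∈ I)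

/-- `relCof J I`: least cardinality of a family `𝒜 ⊆ I` such that
every `I₀ ∈ I` satisfies `I₀ \ A ∈ J` for some `A ∈ 𝒜`. -/
noncomputable def relCof {X : Type*} (J I : Set (Set X)) : Cardinal :=
  sInf {c | ∃ 𝒜 : Set (Set X), 𝒜 ⊆ I ∧ Cardinal.mk 𝒜 = c ∧
    ∀ I₀ ∈ I, ∃ A ∈ 𝒜, I₀ \ A ∈ J}

/-!
A cofinal family for `I₀ ∨ I₁` restricts to cofinal families for `I₀` and `I₁` (keep the
`I₀`-part of each member; what is lost lies in `I₀ ∩ I₁ ⊆ J`), and conversely the pairwise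
unions of cofinal families for `I₀` and `I₁` are cofinal in `I₀ ∨ I₁`. This gives
`max ≤ cof_J(I₀ ∨ I₁) ≤ cof_J(I₀) · cof_J(I₁)`. The product collapses to the maximum because
a relative cofinality is either at most `1` (a finite cofinal family can be replaced by its
union) or infinite.
-/

namespace Cardinal

theorem mul_le_max_of_le_one_or_aleph0_le {a b : Cardinal} (ha : a ≤ 1 ∨ ℵ₀ ≤ a)
    (hb : b ≤ 1 ∨ ℵ₀ ≤ b) : a * b ≤ max a b := by
  rcases ha with ha | ha
  · calc a * b ≤ 1 * b := mul_le_mul_left ha b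
      _ = b := one_mul b
      _ ≤ max a b := le_max_right a b
  rcases hb with hb | hb
  · calc a * b ≤ a * 1 := mul_le_mul_right hb a
      _ = a := mul_one a
      _ ≤ max a b := le_max_left a b
  · exact (mul_le_max a b).trans (max_eq_left (le_max_of_le_left ha)).le

end Cardinal

section RelCof

variable {X : Type*} {I I₀ I₁ J : Set (Set X)}

namespace IsIdealOn

theorem mem_of_subset (hI : IsIdealOn I) {A B : Set X} (hA : A ∈ I) (hBA : B ⊆ A) : B ∈ I :=
  hI.1 A hA B hBA

theorem union_mem (hI : IsIdealOn I) {A B : Set X} (hA : A ∈ I) (hB : B ∈ I) : A ∪ B ∈ I :=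
  hI.2.1 A hA B hB

theorem empty_mem (hI : IsIdealOn I) : ∅ ∈ I :=
  hI.2.2.2 ∅ finite_empty

theorem sUnion_mem (hI : IsIdealOn I) {𝒜 : Set (Set X)} (h𝒜 : 𝒜.Finite) (h𝒜I : 𝒜 ⊆ I) :
    ⋃₀ 𝒜 ∈ I := by
  induction 𝒜, h𝒜 using Set.Finite.induction_on with
  | empty => simpa using hI.empty_mem
  | insert _ _ ih =>
    rw [insert_subset_iff] at h𝒜I
    simpa only [sUnion_insert] using hI.union_mem h𝒜I.1 (ih h𝒜I.2)

end IsIdealOn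

theorem exists_cofinal_family_mk_eq_relCof (hJ : IsIdealOn J) (I : Set (Set X)) :
    ∃ 𝒜 ⊆ I, Cardinal.mk 𝒜 = relCof J I ∧ ∀ C ∈ I, ∃ A ∈ 𝒜, C \ A ∈ J :=
  csInf_mem (s := {c | ∃ 𝒜 ⊆ I, Cardinal.mk 𝒜 = c ∧ ∀ C ∈ I, ∃ A ∈ 𝒜, C \ A ∈ J})
    ⟨_, I, subset_rfl, rfl, fun C hC => ⟨C, hC, by simpa using hJ.empty_mem⟩⟩

theorem relCof_le_mk {𝒜 : Set (Set X)} (h𝒜I : 𝒜 ⊆ I) (h𝒜 : ∀ C ∈ I, ∃ A ∈ 𝒜, C \ A ∈ J) :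
    relCof J I ≤ Cardinal.mk 𝒜 :=
  csInf_le' ⟨𝒜, h𝒜I, rfl, h𝒜⟩

theorem relCof_le_one_or_aleph0_le (hI : IsIdealOn I) (hJ : IsIdealOn J) :
    relCof J I ≤ 1 ∨ ℵ₀ ≤ relCof J I := by
  refine (lt_or_ge (relCof J I) ℵ₀).imp (fun hfin => ?_) id
  obtain ⟨𝒜, h𝒜I, h𝒜mk, h𝒜⟩ := exists_cofinal_family_mk_eq_relCof hJ I
  have h𝒜fin : 𝒜.Finite := Cardinal.lt_aleph0_iff_set_finite.mp (h𝒜mk ▸ hfin)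
  calc relCof J I ≤ Cardinal.mk ({⋃₀ 𝒜} : Set (Set X)) := by
        refine relCof_le_mk (singleton_subset_iff.mpr (hI.sUnion_mem h𝒜fin h𝒜I)) fun C hC => ?_
        obtain ⟨A, hA, hCA⟩ := h𝒜 C hC
        exact ⟨⋃₀ 𝒜, rfl, hJ.mem_of_subset hCA (sdiff_subset_sdiff_right (subset_sUnion_of_mem hA))⟩
    _ = 1 := Cardinal.mk_singleton _

theorem relCof_image2_union_le_mul (hJ : IsIdealOn J) :
    relCof J (image2 (· ∪ ·) I₀ I₁) ≤ relCof J I₀ * relCof J I₁ := by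
  obtain ⟨𝒜₀, h𝒜₀I, h𝒜₀mk, h𝒜₀⟩ := exists_cofinal_family_mk_eq_relCof hJ I₀
  obtain ⟨𝒜₁, h𝒜₁I, h𝒜₁mk, h𝒜₁⟩ := exists_cofinal_family_mk_eq_relCof hJ I₁
  calc relCof J (image2 (· ∪ ·) I₀ I₁) ≤ Cardinal.mk (image2 (· ∪ ·) 𝒜₀ 𝒜₁) := by
        refine relCof_le_mk (image2_subset h𝒜₀I h𝒜₁I) ?_
        rintro _ ⟨A, hA, B, hB, rfl⟩
        obtain ⟨A', hA', hAA'⟩ := h𝒜₀ A hA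
        obtain ⟨B', hB', hBB'⟩ := h𝒜₁ B hB
        refine ⟨A' ∪ B', mem_image2_of_mem hA' hB', hJ.mem_of_subset (hJ.union_mem hAA' hBB') ?_⟩
        rw [union_sdiff_distrib]
        exact union_subset_union (sdiff_subset_sdiff_right subset_union_left)
          (sdiff_subset_sdiff_right subset_union_right)
    _ ≤ Cardinal.mk 𝒜₀ * Cardinal.mk 𝒜₁ := Cardinal.mk_image2_le
    _ = relCof J I₀ * relCof J I₁ := by rw [h𝒜₀mk, h𝒜₁mk]

theorem relCof_le_relCof_image2_union_left (hI₀ : IsIdealOn I₀) (hI₁ : IsIdealOn I₁)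
    (hJ : IsIdealOn J) (hsub : I₀ ∩ I₁ ⊆ J) :
    relCof J I₀ ≤ relCof J (image2 (· ∪ ·) I₀ I₁) := by
  obtain ⟨𝒜, h𝒜I, h𝒜mk, h𝒜⟩ := exists_cofinal_family_mk_eq_relCof hJ (image2 (· ∪ ·) I₀ I₁)
  choose left hleft right hright hunion using fun S : 𝒜 => h𝒜I S.2
  calc relCof J I₀ ≤ Cardinal.mk (range left) := by
        refine relCof_le_mk (range_subset_iff.mpr hleft) fun C hC => ?_
        obtain ⟨S, hS, hCS⟩ := h𝒜 C ⟨C, hC, ∅, hI₁.empty_mem, union_empty C⟩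
        refine ⟨left ⟨S, hS⟩, mem_range_self _, ?_⟩
        -- `C` loses from `S` only the part of `right S` it meets, which lies in `I₀ ∩ I₁ ⊆ J`.
        have hCright : C ∩ right ⟨S, hS⟩ ∈ J :=
          hsub ⟨hI₀.mem_of_subset hC inter_subset_left,
            hI₁.mem_of_subset (hright _) inter_subset_right⟩
        refine hJ.mem_of_subset (hJ.union_mem hCS hCright) fun x ⟨hxC, hxl⟩ => ?_
        by_cases hxS : x ∈ S
        · have hS' : left ⟨S, hS⟩ ∪ right ⟨S, hS⟩ = S := hunion ⟨S, hS⟩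
          rw [← hS'] at hxS
          exact Or.inr ⟨hxC, hxS.resolve_left hxl⟩
        · exact Or.inl ⟨hxC, hxS⟩
    _ ≤ Cardinal.mk 𝒜 := Cardinal.mk_range_le
    _ = relCof J (image2 (· ∪ ·) I₀ I₁) := h𝒜mk

theorem image2_union_comm (I₀ I₁ : Set (Set X)) :
    image2 (· ∪ ·) I₀ I₁ = image2 (· ∪ ·) I₁ I₀ :=
  image2_comm fun A B => union_comm A B

theorem setOf_exists_union_eq_image2 (I₀ I₁ : Set (Set X)) :
    {S : Set X | ∃ A ∈ I₀, ∃ B ∈ I₁, S = A ∪ B} = image2 (· ∪ ·) I₀ I₁ := by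
  ext S
  simp only [mem_ofPred_eq, mem_image2, eq_comm]

end RelCof

theorem stmt12_general {X : Type*} (I₀ I₁ J : Set (Set X))
    (hI₀ : IsIdealOn I₀) (hI₁ : IsIdealOn I₁) (hJ : IsIdealOn J)
    (hsub : I₀ ∩ I₁ ⊆ J) :
    relCof J {S : Set X | ∃ A ∈ I₀, ∃ B ∈ I₁, S = A ∪ B} =
      max (relCof J I₀) (relCof J I₁) := by
  rw [setOf_exists_union_eq_image2]
  have hle₀ := relCof_le_relCof_image2_union_left hI₀ hI₁ hJ hsub
  have hle₁ : relCof J I₁ ≤ relCof J (image2 (· ∪ ·) I₀ I₁) := by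
    rw [image2_union_comm]
    exact relCof_le_relCof_image2_union_left hI₁ hI₀ hJ (inter_comm I₀ I₁ ▸ hsub)
  refine le_antisymm ?_ (max_le hle₀ hle₁)
  exact (relCof_image2_union_le_mul hJ).trans (mul_le_max_of_le_one_or_aleph0_le
    (relCof_le_one_or_aleph0_le hI₀ hJ) (relCof_le_one_or_aleph0_le hI₁ hJ))

theorem stmt12 {X : Type*} [Infinite X] (I₀ I₁ J : Set (Set X))
    (hI₀ : IsIdealOn I₀) (hI₁ : IsIdealOn I₁) (hJ : IsIdealOn J)
    (hnorth : ¬ ∃ A ∈ I₀, Aᶜ ∈ I₁) (hsub : I₀ ∩ I₁ ⊆ J)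
    (hsup : IsIdealOn {S : Set X | ∃ A ∈ I₀, ∃ B ∈ I₁, S = A ∪ B}) :
    relCof J {S : Set X | ∃ A ∈ I₀, ∃ B ∈ I₁, S = A ∪ B} =
      max (relCof J I₀) (relCof J I₁) :=
  stmt12_general I₀ I₁ J hI₀ hI₁ hJ hsub
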